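/- For a unary function S : ℕ → ℤ of the form S(x) = a₀ + a₁x with a₁ ≠ 0 (additive structure), ⟨B,S⟩ is an ℕ-Induction Model only if 1 ∈ B or B is infinite. -/

import Mathlib

/-!
Assume `1 ∉ B` and `B ⊆ [1, M]`. Everything outside `B` is a value of `S(x) = a₀ + a₁x`.
If `a₁ ≥ 2`, then `M + 1` and `M + 2` are both values, so `a₁ ∣ 1`. If `a₁ ≤ 0`, or `a₁ = 1` and
`a₀ ≤ 0`, then `S` maps `[1, max M a₀]` into itself, so nothing beyond that interval is ever
generated. If `a₁ = 1` and `a₀ > 0`, then `S x ≥ 2`, so `1` is never a value.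
-/

/-- Cumulative closure `Cl_i(⟨B,S⟩)` for a unary generating function. -/
def clos1 (S : ℕ+ → ℤ) (B : Set ℕ+) : ℕ → Set ℕ+
  | 0 => B
  | i + 1 => clos1 S B i ∪ {n : ℕ+ | ∃ x ∈ clos1 S B i, S x = (n : ℤ)}

/-- `Sⁱ(B)` for a unary generating function. -/
def spow1 (S : ℕ+ → ℤ) (B : Set ℕ+) : ℕ → Set ℕ+
  | 0 => B
  | i + 1 => {n : ℕ+ | ∃ x ∈ clos1 S B i, S x = (n : ℤ)}

section

variable {S : ℕ+ → ℤ} {B : Set ℕ+}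

theorem spow1_subset_clos1 (i : ℕ) : spow1 S B i ⊆ clos1 S B i := by
  cases i with
  | zero => exact subset_rfl
  | succ i => exact Set.subset_union_right

theorem mem_or_exists_eq_of_iUnion_spow1_eq_univ (hIM : (⋃ i, spow1 S B i) = Set.univ)
    (n : ℕ+) : n ∈ B ∨ ∃ x, S x = n := by
  obtain ⟨i, hi⟩ := Set.mem_iUnion.mp (hIM ▸ Set.mem_univ n)
  cases i with
  | zero => exact Or.inl hi
  | succ i =>
    obtain ⟨x, -, hx⟩ := hi
    exact Or.inr ⟨x, hx⟩

theorem coe_le_of_mem_clos1 {M : ℤ} (hS : ∀ x : ℕ+, (x : ℤ) ≤ M → S x ≤ M)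
    (hB : ∀ b ∈ B, (b : ℤ) ≤ M) : ∀ i, ∀ n ∈ clos1 S B i, (n : ℤ) ≤ M := by
  intro i
  induction i with
  | zero => exact hB
  | succ i ih =>
    rintro n (hn | ⟨x, hx, hxn⟩)
    · exact ih n hn
    · exact hxn ▸ hS x (ih x hx)

theorem iUnion_spow1_ne_univ {M : ℤ} (hS : ∀ x : ℕ+, (x : ℤ) ≤ M → S x ≤ M)
    (hB : ∀ b ∈ B, (b : ℤ) ≤ M) : (⋃ i, spow1 S B i) ≠ Set.univ := by
  intro hIM
  let n : ℕ+ := ⟨M.toNat + 1, M.toNat.succ_pos⟩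
  obtain ⟨i, hi⟩ := Set.mem_iUnion.mp (hIM ▸ Set.mem_univ n)
  have hn : (n : ℤ) ≤ M := coe_le_of_mem_clos1 hS hB i n (spow1_subset_clos1 i hi)
  simp only [n, PNat.mk_coe, Nat.cast_add, Nat.cast_one] at hn
  omega

end

theorem unary_additive_necessary_general (a₀ a₁ : ℤ) (B : Set ℕ+)
    (hIM : (⋃ i, spow1 (fun x => a₀ + a₁ * (x : ℤ)) B i) = Set.univ) :
    (1 : ℕ+) ∈ B ∨ B.Infinite := by
  by_contra! h
  obtain ⟨h1, hfin⟩ := h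
  obtain ⟨M, hM⟩ := hfin.bddAbove
  have hB : ∀ b ∈ B, (b : ℤ) ≤ M := fun b hb => by exact_mod_cast hM hb
  have hgen := mem_or_exists_eq_of_iUnion_spow1_eq_univ hIM
  rcases lt_trichotomy a₁ 1 with hlt | rfl | htwo
  · refine iUnion_spow1_ne_univ (M := max M a₀) (fun x _ => ?_) (fun b hb => ?_) hIM
    · have hx1 : (1 : ℤ) ≤ x := by exact_mod_cast x.pos
      nlinarith [le_max_right (M : ℤ) a₀]
    · exact (hB b hb).trans (le_max_left _ _)
  · rcases le_or_gt a₀ 0 with ha₀ | ha₀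
    · exact iUnion_spow1_ne_univ (fun x hx => by omega) hB hIM
    · obtain ⟨x, hx⟩ := (hgen 1).resolve_left h1
      have := x.pos
      simp only [one_mul, PNat.one_coe, Nat.cast_one] at hx
      omega
  · have hout : ∀ k : ℕ+, M < k → k ∉ B := fun k hk hkB => (hM hkB).not_gt hk
    obtain ⟨x, hx⟩ := (hgen (M + 1)).resolve_left (hout _ (PNat.lt_add_right M 1))
    obtain ⟨y, hy⟩ := (hgen (M + 2)).resolve_left (hout _ (PNat.lt_add_right M 2))
    have hdvd : a₁ ∣ 1 := ⟨y - x, by push_cast at hx hy; linarith⟩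
    have := Int.le_of_dvd one_pos hdvd
    omega

/-- For a unary `S(x) = a₀ + a₁x` with `a₁ ≠ 0` (additive structure), `⟨B,S⟩` is an
ℕ-Induction Model only if `1 ∈ B` or `B` is infinite. -/
theorem unary_additive_necessary (a₀ a₁ : ℤ) (ha₁ : a₁ ≠ 0) (B : Set ℕ+)
    (hne : B.Nonempty)
    (hIM : (⋃ i, spow1 (fun x => a₀ + a₁ * (x : ℤ)) B i) = Set.univ) :
    (1 : ℕ+) ∈ B ∨ B.Infinite :=
  unary_additive_necessary_general a₀ a₁ B hIM
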